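/- If an alternating walk with respect to S exists, then there exists an alternating walk with respect to S that traverses each edge at most twice (at most once in each direction). -/
import Mathlib


def IsAltWalk {V : Type*} (G : SimpleGraph V) (S : Set (Sym2 V))
    (ℓ : ℕ) (w : ℕ → V) : Prop :=
  0 < ℓ ∧ Even ℓ ∧ w ℓ = w 0 ∧
    ∀ i < ℓ, G.Adj (w i) (w (i + 1)) ∧ (s(w i, w (i + 1)) ∈ S ↔ Odd i)

/-- Shortening lemma: if a directed edge repeats, we can cut out the middle. -/
lemma altWalk_shorten {V : Type*} (G : SimpleGraph V) (S : Set (Sym2 V))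
    {ℓ : ℕ} {w : ℕ → V} (hw : IsAltWalk G S ℓ w) {i j : ℕ}
    (hij : i < j) (hj : j < ℓ) (ha : w i = w j) (hb : w (i + 1) = w (j + 1)) :
    ∃ ℓ' w', IsAltWalk G S ℓ' w' ∧ ℓ' < ℓ := by
  obtain ⟨hpos, heven, hclosed, hedge⟩ := hw
  have hi : i < ℓ := hij.trans hj
  have hpar : Odd i ↔ Odd j := by
    have h1 := (hedge i hi).2
    have h2 := (hedge j hj).2
    rw [ha, hb] at h1
    rw [← h1, h2]
  have hd : Even (j - i) := by
    rcases Nat.even_or_odd i with he | ho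
    · have : Even j := by
        rcases Nat.even_or_odd j with h | h
        · exact h
        · exact absurd (hpar.mpr h) (Nat.not_odd_iff_even.mpr he)
      exact (Nat.even_sub (by omega)).mpr (by simp [this, he])
    · exact (Nat.even_sub (by omega)).mpr (by simp [Nat.not_even_iff_odd.mpr (hpar.mp ho), Nat.not_even_iff_odd.mpr ho])
  set d := j - i with hdd
  have hdpos : 0 < d := by omega
  refine ⟨ℓ - d, fun k => if k ≤ i then w k else w (k + d), ?_, by omega⟩
  have hle : d ≤ ℓ := by omega
  refine ⟨?_, ?_, ?_, ?_⟩
  · omega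
  · exact (Nat.even_sub hle).mpr (by simp [heven, hd])
  · have hℓ' : ¬ (ℓ - d ≤ i) := by omega
    dsimp only
    rw [if_neg hℓ', if_pos (Nat.zero_le i)]
    have : ℓ - d + d = ℓ := by omega
    rw [this, hclosed]
  · intro k hk
    dsimp only
    rcases lt_trichotomy k i with hki | hki | hki
    · have h1 : k ≤ i := le_of_lt hki
      have h2 : k + 1 ≤ i := hki
      rw [if_pos h1, if_pos h2]
      exact hedge k (by omega)
    · subst hki
      rw [if_pos (le_refl k), if_neg (by omega)]
      have e1 : k + 1 + d = j + 1 := by omega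
      rw [e1, ha]
      refine ⟨(hedge j hj).1, ?_⟩
      rw [(hedge j hj).2]
      exact hpar.symm
    · rw [if_neg (by omega : ¬ k ≤ i), if_neg (by omega : ¬ k + 1 ≤ i)]
      have hlt : k + d < ℓ := by omega
      have e1 : k + 1 + d = k + d + 1 := by omega
      rw [e1]
      have := hedge (k + d) hlt
      refine ⟨this.1, ?_⟩
      rw [this.2]
      obtain ⟨c, hc⟩ := hd
      constructor <;> intro h <;> [skip; skip] <;>
        · rw [Nat.odd_iff] at h ⊢; omega

/-- If some alternating walk exists, then there is an alternating walk traversing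
    each (directed) edge at most once in each direction, hence each edge at most
    twice in total. -/
theorem altWalk_each_edge_at_most_twice {V : Type*} [Fintype V] [DecidableEq V]
    (G : SimpleGraph V) (S : Set (Sym2 V))
    (h : ∃ ℓ w, IsAltWalk G S ℓ w) :
    ∃ ℓ w, IsAltWalk G S ℓ w ∧
      (∀ a b : V,
        ((Finset.range ℓ).filter (fun i => w i = a ∧ w (i + 1) = b)).card ≤ 1) ∧
      (∀ e : Sym2 V,
        ((Finset.range ℓ).filter (fun i => s(w i, w (i + 1)) = e)).card ≤ 2) := by
  classical
  have h' : ∃ ℓ, ∃ w, IsAltWalk G S ℓ w := h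
  let ℓ := Nat.find h'
  obtain ⟨w, hw⟩ := Nat.find_spec h'
  have hmin : ∀ ℓ' < ℓ, ¬ ∃ w', IsAltWalk G S ℓ' w' := fun ℓ' hℓ' =>
    Nat.find_min h' hℓ'
  have key : ∀ a b : V,
      ((Finset.range ℓ).filter (fun i => w i = a ∧ w (i + 1) = b)).card ≤ 1 := by
    intro a b
    by_contra hc
    push_neg at hc
    obtain ⟨x, hx, y, hy, hxy⟩ := Finset.one_lt_card.mp hc
    simp only [Finset.mem_filter, Finset.mem_range] at hx hy
    have main : ∀ x y : ℕ, x < y → (x < ℓ ∧ w x = a ∧ w (x + 1) = b) →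
        (y < ℓ ∧ w y = a ∧ w (y + 1) = b) → False := by
      intro x y hlt hx hy
      obtain ⟨ℓ', w', hw', hℓ'⟩ := altWalk_shorten G S hw hlt hy.1
        (hx.2.1.trans hy.2.1.symm) (hx.2.2.trans hy.2.2.symm)
      exact hmin ℓ' hℓ' ⟨w', hw'⟩
    rcases lt_or_gt_of_ne hxy with hc | hc
    · exact main x y hc hx hy
    · exact main y x hc hy hx
  refine ⟨ℓ, w, hw, key, ?_⟩
  intro e
  induction e using Sym2.ind with
  | _ a b =>
    have hsub : ((Finset.range ℓ).filter (fun i => s(w i, w (i + 1)) = s(a, b))) ⊆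
        ((Finset.range ℓ).filter (fun i => w i = a ∧ w (i + 1) = b)) ∪
        ((Finset.range ℓ).filter (fun i => w i = b ∧ w (i + 1) = a)) := by
      intro x hx
      simp only [Finset.mem_filter, Finset.mem_range, Finset.mem_union] at hx ⊢
      rcases Sym2.eq_iff.mp hx.2 with ⟨h1, h2⟩ | ⟨h1, h2⟩
      · exact Or.inl ⟨hx.1, h1, h2⟩
      · exact Or.inr ⟨hx.1, h1, h2⟩
    calc _ ≤ _ := Finset.card_le_card hsub
      _ ≤ _ + _ := Finset.card_union_le _ _
      _ ≤ 2 := by have := key a b; have := key b a; omega
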